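/- With a_{n,k} the admissible matrix of a sequence s, the shifted Hankel determinant D_{1,n} = det(a_{i+j+1,0})_{i,j=0}^{n-1} satisfies the recurrence D_{1,n} = s_{n-1}·D_{1,n-1} - D_{1,n-2} with D_{1,0} = 1 and D_{1,1} = s_0; equivalently D_{1,n} equals the determinant of the n×n tridiagonal matrix with diagonal entries s_0, ..., s_{n-1} and 1's on the sub- and super-diagonals. -/

import Mathlib

/-!
The rows of the admissible matrix are the orbit of `e₀` under the symmetric Jacobi matrix
`J = tridiag s`: `a m k = (J ^ m) 0 k` as long as the truncation of `J` is not felt. Symmetry of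
`J` then gives the orthogonality relation `a (m + p) 0 = ∑ k, a m k * a p k`, and since raising
the row index by one is right multiplication by `J`, the shifted Hankel matrix factors as
`A * J * Aᵀ` with `A = (a i k)_{i,k<n}` lower unitriangular. Hence `D₁ n = det J_n`, whose
three-term recurrence is the Laplace expansion along the last row.
-/

open Matrix Finset

section

variable {R : Type*} [CommRing R]

lemma Fin.sum_univ_eq_sum_univ_of_le {M : Type*} [AddCommMonoid M] {n N : ℕ} (hnN : n ≤ N)
    (f : ℕ → M) (hf : ∀ k, n ≤ k → k < N → f k = 0) :
    ∑ k : Fin N, f k = ∑ k : Fin n, f k := by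
  rw [Fin.sum_univ_eq_sum_range, Fin.sum_univ_eq_sum_range]
  refine (Finset.sum_subset (range_subset_range.2 hnN) fun k hkN hkn => hf k ?_ ?_).symm
  · simpa using hkn
  · simpa using hkN

lemma Fin.sum_ite_natCast_eq {N : ℕ} (c : ℤ) (x : R) (hx : c < 0 ∨ N ≤ c → x = 0) :
    ∑ l : Fin N, (if ((l : ℕ) : ℤ) = c then x else 0) = x := by
  by_cases hc : 0 ≤ c ∧ c < N
  · rw [Fintype.sum_eq_single ⟨c.toNat, by omega⟩ fun l hl => if_neg ?_]
    · simp [hc.1]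
    · contrapose! hl
      ext
      simp only
      omega
  · rw [Finset.sum_eq_zero fun l _ => if_neg (by omega), hx (by omega)]

def tridiag (s : ℕ → R) (n : ℕ) : Matrix (Fin n) (Fin n) R :=
  of fun i j =>
    if (i : ℕ) = (j : ℕ) then s i
    else if (i : ℕ) + 1 = (j : ℕ) ∨ (j : ℕ) + 1 = (i : ℕ) then 1 else 0

lemma tridiag_transpose (s : ℕ → R) (n : ℕ) : (tridiag s n)ᵀ = tridiag s n := by
  ext i j
  simp only [transpose_apply, tridiag, of_apply]
  split_ifs <;> first | rfl | omega | simp_all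

lemma tridiag_submatrix_castSucc (s : ℕ → R) (n : ℕ) :
    (tridiag s (n + 1)).submatrix Fin.castSucc Fin.castSucc = tridiag s n := by
  ext i j
  simp [tridiag]

lemma Matrix.det_eq_det_submatrix_castSucc_of_apply_last {n : ℕ}
    (M : Matrix (Fin (n + 1)) (Fin (n + 1)) R)
    (h : ∀ i, M i (Fin.last n) = if i = Fin.last n then 1 else 0) :
    M.det = (M.submatrix Fin.castSucc Fin.castSucc).det := by
  rw [det_succ_column M (Fin.last n), Fintype.sum_eq_single (Fin.last n)]
  · simp [h, ← two_mul, pow_mul]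
  · intro i hi
    simp [h, hi]

lemma det_tridiag_submatrix_castSucc_succAbove (s : ℕ → R) (n : ℕ) :
    ((tridiag s (n + 2)).submatrix Fin.castSucc (Fin.last n).castSucc.succAbove).det =
      (tridiag s n).det := by
  rw [det_eq_det_submatrix_castSucc_of_apply_last]
  · rw [submatrix_submatrix]
    congr 1
    ext i j
    simp [tridiag, Fin.succAbove_castSucc_of_lt _ _ j.castSucc_lt_last]
  · intro i
    have := i.isLt
    simp only [tridiag, submatrix_apply, of_apply, Fin.ext_iff, Fin.succAbove_castSucc_self,
      Fin.val_castSucc, Fin.val_succ, Fin.val_last]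
    split_ifs <;> first | rfl | omega

lemma tridiag_last_apply_of_lt (s : ℕ → R) {n : ℕ} (j : Fin (n + 2)) (hj : (j : ℕ) < n) :
    tridiag s (n + 2) (Fin.last (n + 1)) j = 0 := by
  simp only [tridiag, of_apply, Fin.val_last]
  split_ifs <;> first | rfl | omega

lemma det_tridiag_succ_succ (s : ℕ → R) (n : ℕ) :
    (tridiag s (n + 2)).det = s (n + 1) * (tridiag s (n + 1)).det - (tridiag s n).det := by
  rw [det_succ_row _ (Fin.last (n + 1)), Fintype.sum_eq_add (Fin.last (n + 1))
    (Fin.last n).castSucc (Fin.ne_of_gt (Fin.castSucc_lt_last _))]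
  · rw [Fin.succAbove_last, tridiag_submatrix_castSucc,
      det_tridiag_submatrix_castSucc_succAbove]
    simp [tridiag, ← two_mul, pow_mul]
    ring
  · rintro j ⟨hlast, hpen⟩
    rw [Fin.ne_iff_vne] at hlast hpen
    simp only [Fin.val_last, Fin.val_castSucc] at hlast hpen
    rw [tridiag_last_apply_of_lt s j (by omega), mul_zero, zero_mul]

lemma sum_mul_tridiag (s : ℕ → R) {N : ℕ} (f : ℤ → R) (hf₀ : f (-1) = 0) (hfN : f N = 0)
    (k : Fin N) :
    ∑ l : Fin N, f (l : ℕ) * tridiag s N l k =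
      f ((k : ℕ) - 1) + s k * f (k : ℕ) + f ((k : ℕ) + 1) := by
  have hterm : ∀ l : Fin N, f (l : ℕ) * tridiag s N l k =
      (if ((l : ℕ) : ℤ) = (k : ℕ) - 1 then f ((k : ℕ) - 1) else 0) +
        (if l = k then s k * f (k : ℕ) else 0) +
        (if ((l : ℕ) : ℤ) = (k : ℕ) + 1 then f ((k : ℕ) + 1) else 0) := by
    intro l
    simp only [tridiag, of_apply, Fin.ext_iff]
    split_ifs <;> first
      | (exfalso; omega)
      | (rw [Fin.ext ‹(l : ℕ) = k›]; ring)
      | (rw [‹((l : ℕ) : ℤ) = (k : ℕ) - 1›]; ring)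
      | (rw [‹((l : ℕ) : ℤ) = (k : ℕ) + 1›]; ring)
      | ring
  rw [Finset.sum_congr rfl fun l _ => hterm l, sum_add_distrib, sum_add_distrib,
    Fintype.sum_ite_eq', Fin.sum_ite_natCast_eq, Fin.sum_ite_natCast_eq]
  · intro hk
    rw [show ((k : ℕ) : ℤ) + 1 = N by omega, hfN]
  · intro hk
    rw [show ((k : ℕ) : ℤ) - 1 = -1 by omega, hf₀]

def leadingBlock (a : ℕ → ℤ → R) (n : ℕ) : Matrix (Fin n) (Fin n) R :=
  of fun i k => a (i : ℕ) (k : ℕ)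

structure IsAdmissible (s : ℕ → R) (a : ℕ → ℤ → R) : Prop where
  zero : ∀ k, a 0 k = if k = 0 then 1 else 0
  neg : ∀ n k, k < 0 → a n k = 0
  succ : ∀ n k, 0 ≤ k → a (n + 1) k = a n (k - 1) + s k.toNat * a n k + a n (k + 1)

namespace IsAdmissible

variable {s : ℕ → R} {a : ℕ → ℤ → R} (h : IsAdmissible s a)
include h

lemma eq_zero_of_lt {n : ℕ} {k : ℤ} (hk : n < k) : a n k = 0 := by
  induction n generalizing k with
  | zero => rw [h.zero, if_neg (by omega)]
  | succ n ih => rw [h.succ n k (by omega), ih (by omega), ih (by omega), ih (by omega)]; ring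

lemma apply_self (n : ℕ) : a n n = 1 := by
  induction n with
  | zero => simp [h.zero]
  | succ n ih =>
    rw [h.succ n _ (by omega), Nat.cast_succ, add_sub_cancel_right, ih,
      h.eq_zero_of_lt (by omega), h.eq_zero_of_lt (by omega)]
    ring

lemma succ_eq_sum_mul_tridiag {m N : ℕ} (hm : m < N) (k : Fin N) :
    a (m + 1) (k : ℕ) = ∑ l : Fin N, a m (l : ℕ) * tridiag s N l k := by
  rw [sum_mul_tridiag s _ (h.neg m _ (by omega)) (h.eq_zero_of_lt (by omega)),
    h.succ m k (by omega)]
  simp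

lemma eq_tridiag_pow_apply {m N : ℕ} (hm : m ≤ N) (k : Fin (N + 1)) :
    a m (k : ℕ) = (tridiag s (N + 1) ^ m) 0 k := by
  induction m generalizing k with
  | zero =>
    rw [h.zero, pow_zero, one_apply]
    simp only [Nat.cast_eq_zero, Fin.val_eq_zero_iff, eq_comm]
  | succ m ih =>
    rw [h.succ_eq_sum_mul_tridiag (by omega), pow_succ, mul_apply]
    exact Finset.sum_congr rfl fun l _ => by rw [ih (by omega)]

lemma add_eq_sum_mul {m p N : ℕ} (hmp : m + p ≤ N) :
    a (m + p) 0 = ∑ k : Fin (N + 1), a m (k : ℕ) * a p (k : ℕ) := by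
  have hpow := h.eq_tridiag_pow_apply hmp 0
  simp only [Fin.val_zero, Nat.cast_zero] at hpow
  rw [hpow, pow_add, mul_apply]
  refine Finset.sum_congr rfl fun k _ => ?_
  rw [h.eq_tridiag_pow_apply (by omega), h.eq_tridiag_pow_apply (by omega),
    ← transpose_apply (_ ^ p), transpose_pow, tridiag_transpose]

lemma leadingBlock_mul_tridiag (n : ℕ) :
    leadingBlock a n * tridiag s n = of fun i k : Fin n => a ((i : ℕ) + 1) (k : ℕ) := by
  ext i k
  rw [mul_apply, of_apply, h.succ_eq_sum_mul_tridiag i.isLt]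
  rfl

lemma det_leadingBlock (n : ℕ) : (leadingBlock a n).det = 1 := by
  rw [det_of_isLowerTriangular (leadingBlock a n) fun i k hik =>
    h.eq_zero_of_lt (by simpa using hik)]
  exact Finset.prod_eq_one fun i _ => h.apply_self i

lemma shiftedHankel_eq (n : ℕ) :
    (of fun i j : Fin n => a ((i : ℕ) + (j : ℕ) + 1) 0) =
      leadingBlock a n * tridiag s n * (leadingBlock a n)ᵀ := by
  ext i j
  rw [h.leadingBlock_mul_tridiag, mul_apply, of_apply, Nat.add_right_comm,
    h.add_eq_sum_mul (N := n + n) (by omega),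
    Fin.sum_univ_eq_sum_univ_of_le (n := n) (N := n + n + 1)
      (f := fun k => a ((i : ℕ) + 1) k * a j k) (by omega)]
  · rfl
  · intro k hk _
    rw [h.eq_zero_of_lt (n := j) (by omega), mul_zero]

lemma det_shiftedHankel (n : ℕ) :
    (of fun i j : Fin n => a ((i : ℕ) + (j : ℕ) + 1) 0).det = (tridiag s n).det := by
  rw [h.shiftedHankel_eq, det_mul, det_mul, det_transpose, h.det_leadingBlock, one_mul, mul_one]

end IsAdmissible

end

/-- The shifted Hankel determinant `D₁ n = det (a (i+j+1) 0)_{i,j=0}^{n-1}` of an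
admissible matrix satisfies `D₁ 0 = 1`, `D₁ 1 = s 0`, the recurrence
`D₁ n = s (n-1) * D₁ (n-1) - D₁ (n-2)` for `n ≥ 2`, and equals the determinant of the
`n × n` tridiagonal matrix with diagonal `s 0, …, s (n-1)` and `1`'s off the diagonal. -/
theorem admissible_shifted_hankel (s : ℕ → ℝ) (a : ℕ → ℤ → ℝ)
    (h0 : ∀ k : ℤ, a 0 k = if k = 0 then 1 else 0)
    (hneg : ∀ (n : ℕ) (k : ℤ), k < 0 → a n k = 0)
    (hrec : ∀ (n : ℕ) (k : ℤ), 0 ≤ k →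
      a (n + 1) k = a n (k - 1) + s k.toNat * a n k + a n (k + 1))
    (D : ℕ → ℝ)
    (hD : ∀ n : ℕ, D n = Matrix.det (Matrix.of fun i j : Fin n => a ((i : ℕ) + (j : ℕ) + 1) 0)) :
    D 0 = 1 ∧ D 1 = s 0 ∧
    (∀ n : ℕ, 2 ≤ n → D n = s (n - 1) * D (n - 1) - D (n - 2)) ∧
    (∀ n : ℕ, D n = Matrix.det (Matrix.of fun i j : Fin n =>
      if (i : ℕ) = (j : ℕ) then s i
      else if (i : ℕ) + 1 = (j : ℕ) ∨ (j : ℕ) + 1 = (i : ℕ) then 1 else 0)) := by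
  have h : IsAdmissible s a := ⟨h0, hneg, hrec⟩
  have hJ : ∀ n, D n = (tridiag s n).det := fun n => (hD n).trans (h.det_shiftedHankel n)
  refine ⟨by simp [hJ], by simp [hJ, tridiag], fun n hn => ?_, hJ⟩
  obtain ⟨m, rfl⟩ := Nat.exists_eq_add_of_le' hn
  simpa [hJ] using det_tridiag_succ_succ s m
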